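/- arXiv:2109.03267 — 2 statements merged into one kernel-verified Lean document; each statement's English description precedes it below -/
import Mathlib

section
/- For every real r with 1/3 < r < 1 there exist n ≥ 2 and matrices A, S, B ∈ M_n(ℂ) with A upper triangular, Tr(A) a nonnegative real number, S Hermitian diagonal with real entries satisfying Re(A) ≤ S, and B strictly upper triangular with ‖B‖ ≤ 1, such that Tr(A) + ∑_{m=1}^∞ |Tr(A B*)| r^m > Tr(S). -/
/-!
Take `S = 1`, `A = -2 U` with `U` the strictly upper triangular matrix of ones, and `B` the
forward shift. Then `S - Re A` is the all-ones matrix, a rank one positive semidefinite matrix,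
`Tr A = 0`, `B` is a partial isometry, and `Tr (A Bᴴ)` is `-2` times the number `n - 1` of
superdiagonal entries. The inequality becomes `2 (n - 1) r / (1 - r) > n`, i.e. `r > n / (3n - 2)`,
which holds for `n` large as soon as `r > 1/3`.
-/

open Matrix
open scoped Matrix.Norms.L2Operator ComplexOrder

namespace Matrix

def upperShift (α : Type*) [Zero α] [One α] (n : ℕ) : Matrix (Fin n) (Fin n) α :=
  of fun i j => if (j : ℕ) = i + 1 then 1 else 0

def strictUpperOnes (α : Type*) [Zero α] [One α] (ι : Type*) [LinearOrder ι] : Matrix ι ι α :=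
  of fun i j => if i < j then 1 else 0

section Semiring

variable {α : Type*} [Semiring α]

@[simp]
lemma upperShift_apply {n : ℕ} (i j : Fin n) :
    upperShift α n i j = if (j : ℕ) = i + 1 then 1 else 0 :=
  rfl

lemma upperShift_apply_eq_zero_of_le {n : ℕ} {i j : Fin n} (h : j ≤ i) :
    upperShift α n i j = 0 :=
  if_neg (by omega)

@[simp]
lemma strictUpperOnes_apply {ι : Type*} [LinearOrder ι] (i j : ι) :
    strictUpperOnes α ι i j = if i < j then 1 else 0 :=
  rfl

lemma trace_strictUpperOnes {ι : Type*} [Fintype ι] [LinearOrder ι] :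
    (strictUpperOnes α ι).trace = 0 := by
  simp [trace]

variable [StarRing α]

lemma upperShift_mul_conjTranspose (n : ℕ) :
    upperShift α n * (upperShift α n)ᴴ =
      diagonal fun i : Fin n => if (i : ℕ) + 1 < n then 1 else 0 := by
  ext i l
  simp only [mul_apply, conjTranspose_apply, upperShift_apply]
  rw [Fin.sum_univ_eq_sum_range (fun k => (if k = (i : ℕ) + 1 then (1 : α) else 0) *
    star (if k = (l : ℕ) + 1 then 1 else 0))]
  simp only [ite_mul, one_mul, zero_mul, Finset.sum_ite_eq', Finset.mem_range, diagonal_apply]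
  by_cases h : i = l
  · subst h; simp
  · simp [h, Fin.val_ne_of_ne h]

lemma trace_upperShift_mul_conjTranspose (n : ℕ) :
    (upperShift α n * (upperShift α n)ᴴ).trace = (n - 1 : ℕ) := by
  rw [upperShift_mul_conjTranspose, trace_diagonal,
    Fin.sum_univ_eq_sum_range (fun i => if i + 1 < n then (1 : α) else 0), Finset.sum_boole,
    show {i ∈ Finset.range n | i + 1 < n} = Finset.range (n - 1) by ext; simp; omega,
    Finset.card_range]

lemma diag_strictUpperOnes_mul_conjTranspose_upperShift (n : ℕ) :
    (strictUpperOnes α (Fin n) * (upperShift α n)ᴴ).diag =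
      (upperShift α n * (upperShift α n)ᴴ).diag := by
  ext i
  simp only [diag, mul_apply, conjTranspose_apply, upperShift_apply, strictUpperOnes_apply]
  refine Finset.sum_congr rfl fun j _ => ?_
  by_cases h : (j : ℕ) = i + 1
  · simp [h, Fin.lt_def]
  · simp [h]

lemma trace_strictUpperOnes_mul_conjTranspose_upperShift (n : ℕ) :
    (strictUpperOnes α (Fin n) * (upperShift α n)ᴴ).trace = (n - 1 : ℕ) := by
  rw [trace, diag_strictUpperOnes_mul_conjTranspose_upperShift, ← trace,
    trace_upperShift_mul_conjTranspose]

lemma one_add_strictUpperOnes_add_conjTranspose {ι : Type*} [LinearOrder ι] :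
    1 + strictUpperOnes α ι + (strictUpperOnes α ι)ᴴ = of fun _ _ => 1 := by
  ext i j
  rcases lt_trichotomy i j with h | rfl | h
  · simp [h, h.ne, lt_asymm h]
  · simp
  · simp [h, h.ne', lt_asymm h]

end Semiring

variable {𝕜 : Type*} [RCLike 𝕜]

lemma norm_upperShift_le_one (n : ℕ) : ‖upperShift 𝕜 n‖ ≤ 1 := by
  have h := l2_opNorm_conjTranspose_mul_self (upperShift 𝕜 n)ᴴ
  rw [conjTranspose_conjTranspose, upperShift_mul_conjTranspose, l2_opNorm_diagonal,
    l2_opNorm_conjTranspose] at h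
  have hd : ‖fun i : Fin n => if (i : ℕ) + 1 < n then (1 : 𝕜) else 0‖ ≤ 1 :=
    (pi_norm_le_iff_of_nonneg zero_le_one).2 fun i => by split_ifs <;> simp
  nlinarith [norm_nonneg (upperShift 𝕜 n)]

lemma posSemidef_one_sub_re_neg_two_smul_strictUpperOnes {ι : Type*} [Fintype ι]
    [LinearOrder ι] :
    (1 - (2 : 𝕜)⁻¹ •
      ((-2 : 𝕜) • strictUpperOnes 𝕜 ι + ((-2 : 𝕜) • strictUpperOnes 𝕜 ι)ᴴ)).PosSemidef := by
  have h : 1 - (2 : 𝕜)⁻¹ • ((-2 : 𝕜) • strictUpperOnes 𝕜 ι + ((-2 : 𝕜) • strictUpperOnes 𝕜 ι)ᴴ) =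
      1 + strictUpperOnes 𝕜 ι + (strictUpperOnes 𝕜 ι)ᴴ := by
    rw [conjTranspose_smul, star_neg, star_ofNat]
    module
  rw [h, one_add_strictUpperOnes_add_conjTranspose]
  simpa [vecMulVec] using posSemidef_vecMulVec_self_star (fun _ : ι => (1 : 𝕜))

end Matrix

lemma tsum_mul_pow_succ (c : ℝ) {r : ℝ} (hr0 : 0 ≤ r) (hr1 : r < 1) :
    ∑' m : ℕ, c * r ^ (m + 1) = c * (r / (1 - r)) := by
  simp_rw [pow_succ', ← mul_assoc]
  rw [tsum_mul_left, tsum_geometric_of_lt_one hr0 hr1, mul_assoc, div_eq_mul_inv]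

lemma exists_nat_div_three_mul_sub_two_lt {r : ℝ} (hr : 1 / 3 < r) :
    ∃ n : ℕ, 2 ≤ n ∧ (n : ℝ) / (3 * n - 2) < r := by
  obtain ⟨k, hk⟩ := exists_nat_gt (2 * r / (3 * r - 1))
  refine ⟨k + 2, by omega, ?_⟩
  rw [div_lt_iff₀ (by linarith)] at hk
  rw [div_lt_iff₀ (by push_cast; linarith)]
  push_cast
  linarith

/-- `1/3` is optimal in Bohr's inequality over upper triangular matrices of
unbounded size. -/
theorem bohr_matrix_optimality_unbounded_size (r : ℝ) (hr1 : 1 / 3 < r) (hr2 : r < 1) :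
    ∃ n : ℕ, 2 ≤ n ∧
      ∃ A S B : Matrix (Fin n) (Fin n) ℂ,
        (∀ i j : Fin n, j < i → A i j = 0) ∧
        0 ≤ A.trace ∧
        S.IsHermitian ∧
        (∀ i j : Fin n, i ≠ j → S i j = 0) ∧
        (∀ i : Fin n, (S i i).im = 0) ∧
        (S - (2 : ℂ)⁻¹ • (A + Aᴴ)).PosSemidef ∧
        (∀ i j : Fin n, j ≤ i → B i j = 0) ∧
        ‖B‖ ≤ 1 ∧
        A.trace.re + ∑' m : ℕ, ‖(A * Bᴴ).trace‖ * r ^ (m + 1) >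
          S.trace.re := by
  obtain ⟨n, hn2, hnr⟩ := exists_nat_div_three_mul_sub_two_lt hr1
  refine ⟨n, hn2, (-2 : ℂ) • strictUpperOnes ℂ (Fin n), 1, upperShift ℂ n,
    fun i j h => by simp [lt_asymm h], by simp [trace_strictUpperOnes], isHermitian_one,
    fun i j h => one_apply_ne h, fun i => by simp,
    posSemidef_one_sub_re_neg_two_smul_strictUpperOnes,
    fun i j h => upperShift_apply_eq_zero_of_le h, norm_upperShift_le_one n, ?_⟩
  rw [smul_mul, trace_smul, trace_smul, trace_strictUpperOnes_mul_conjTranspose_upperShift,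
    trace_strictUpperOnes, trace_one, tsum_mul_pow_succ _ (by linarith) hr2]
  simp only [smul_eq_mul, mul_zero, Complex.zero_re, neg_mul, norm_neg, Complex.norm_mul,
    Complex.norm_ofNat, RCLike.norm_natCast, zero_add, Fintype.card_fin, Complex.natCast_re,
    gt_iff_lt]
  have hn : (2 : ℝ) ≤ n := by exact_mod_cast hn2
  rw [div_lt_iff₀ (by linarith)] at hnr
  rw [Nat.cast_sub (by omega), Nat.cast_one, ← mul_div_assoc, lt_div_iff₀ (by linarith)]
  linarith
end

section
/- Let n ≥ 1, let A ∈ M_n(ℂ) be upper triangular, let S ∈ M_n(ℂ) be Hermitian and upper triangular (hence diagonal with real entries) with Re(A) ≤ S, and let B ∈ M_n(ℂ) be strictly upper triangular with ‖B‖ ≤ 1. Then |Tr(A B*)| ≤ 2·(Tr(S) − Re(Tr(A))). -/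
open Matrix
open scoped Matrix.Norms.L2Operator ComplexOrder

/-!
Put `M = S - Re A ≥ 0`. Since `S` is diagonal and `B` strictly upper triangular, both `S Bᴴ` and
`Aᴴ Bᴴ = (B A)ᴴ` have zero trace, so `Tr(A Bᴴ) = -2 Tr(M Bᴴ)`. Writing `M = Dᴴ D` and letting `dᵢ`
be the columns of `Dᴴ`, we get `Tr(M X) = Σᵢ ⟨dᵢ, X dᵢ⟩` and `Tr M = Σᵢ ‖dᵢ‖²`, so by
Cauchy–Schwarz `|Tr(M X)| ≤ ‖X‖ Tr M`; finally `Tr M = Tr S - Re Tr A`.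
-/

namespace Matrix

variable {𝕜 ι : Type*} [RCLike 𝕜] [Fintype ι]

theorem trace_mul_eq_zero_of_upperTriangular {R : Type*} [LinearOrder ι]
    [NonUnitalNonAssocSemiring R] {P Q : Matrix ι ι R} (hP : ∀ i j, j < i → P i j = 0)
    (hQ : ∀ i j, j ≤ i → Q i j = 0) : (P * Q).trace = 0 :=
  Finset.sum_eq_zero fun i _ => Finset.sum_eq_zero fun j _ => by
    show P i j * Q j i = 0
    rcases lt_or_ge j i with h | h
    · rw [hP i j h, zero_mul]
    · rw [hQ j i h, mul_zero]

theorem diag_mul_mul_conjTranspose (D X : Matrix ι ι 𝕜) (i : ι) :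
    (D * X * Dᴴ) i i = D i ⬝ᵥ X *ᵥ star (D i) :=
  mul_mul_apply D X Dᴴ i i

variable [DecidableEq ι]

theorem norm_star_dotProduct_mulVec_le (X : Matrix ι ι 𝕜) (v : ι → 𝕜) :
    ‖star v ⬝ᵥ X *ᵥ v‖ ≤ ‖X‖ * RCLike.re (star v ⬝ᵥ v) := by
  have hinner : star v ⬝ᵥ X *ᵥ v = inner 𝕜 (WithLp.toLp 2 v) (WithLp.toLp 2 (X *ᵥ v)) := by
    rw [EuclideanSpace.inner_toLp_toLp, dotProduct_comm]
  have hnorm : RCLike.re (star v ⬝ᵥ v) = ‖WithLp.toLp 2 v‖ ^ 2 := by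
    rw [← inner_self_eq_norm_sq (𝕜 := 𝕜), EuclideanSpace.inner_toLp_toLp, dotProduct_comm]
  rw [hinner, hnorm]
  calc _ ≤ ‖WithLp.toLp 2 v‖ * ‖WithLp.toLp 2 (X *ᵥ v)‖ := norm_inner_le_norm _ _
    _ ≤ ‖WithLp.toLp 2 v‖ * (‖X‖ * ‖WithLp.toLp 2 v‖) :=
        mul_le_mul_of_nonneg_left (X.l2_opNorm_mulVec _) (norm_nonneg _)
    _ = ‖X‖ * ‖WithLp.toLp 2 v‖ ^ 2 := by ring

open scoped MatrixOrder in
theorem PosSemidef.norm_trace_mul_le {M : Matrix ι ι 𝕜} (hM : M.PosSemidef) (X : Matrix ι ι 𝕜) :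
    ‖(M * X).trace‖ ≤ ‖X‖ * RCLike.re M.trace := by
  obtain ⟨D, rfl⟩ := CStarAlgebra.nonneg_iff_eq_star_mul_self.mp hM.nonneg
  have htrace : ∀ Y : Matrix ι ι 𝕜, (star D * D * Y).trace = ∑ i, (D * Y * Dᴴ) i i := fun Y => by
    rw [star_eq_conjTranspose, Matrix.mul_assoc, trace_mul_comm, Matrix.mul_assoc]; rfl
  calc ‖(star D * D * X).trace‖ ≤ ∑ i, ‖(D * X * Dᴴ) i i‖ := htrace X ▸ norm_sum_le _ _
    _ ≤ ∑ i, ‖X‖ * RCLike.re ((D * (1 : Matrix ι ι 𝕜) * Dᴴ) i i) :=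
        Finset.sum_le_sum fun i _ => by
          simpa only [diag_mul_mul_conjTranspose, one_mulVec, star_star] using
            norm_star_dotProduct_mulVec_le X (star (D i))
    _ = ‖X‖ * RCLike.re (star D * D).trace := by
        rw [← Matrix.mul_one (star D * D), htrace, map_sum, Finset.mul_sum]

end Matrix

theorem bohr_coefficient_estimate_general {n : ℕ}
    (A S B : Matrix (Fin n) (Fin n) ℂ)
    (hA_ut : ∀ i j : Fin n, j < i → A i j = 0)
    (hS_herm : S.IsHermitian)
    (hS_ut : ∀ i j : Fin n, j < i → S i j = 0)
    (hAS : (S - (2 : ℂ)⁻¹ • (A + Aᴴ)).PosSemidef)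
    (hB_sut : ∀ i j : Fin n, j ≤ i → B i j = 0)
    (hB_norm : ‖B‖ ≤ 1) :
    ‖(A * Bᴴ).trace‖ ≤ 2 * (S.trace.re - A.trace.re) := by
  set M := S - (2 : ℂ)⁻¹ • (A + Aᴴ)
  have hSB : (S * Bᴴ).trace = 0 := by
    rw [← star_star (S * Bᴴ).trace, ← trace_conjTranspose, conjTranspose_mul,
      conjTranspose_conjTranspose, hS_herm.eq, trace_mul_comm,
      trace_mul_eq_zero_of_upperTriangular hS_ut hB_sut, star_zero]
  have hAB : (Aᴴ * Bᴴ).trace = 0 := by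
    rw [← conjTranspose_mul, trace_conjTranspose, trace_mul_comm,
      trace_mul_eq_zero_of_upperTriangular hA_ut hB_sut, star_zero]
  have hMB : (A * Bᴴ).trace = -2 * (M * Bᴴ).trace := by
    simp only [M, sub_mul, add_mul, smul_mul, trace_sub, trace_smul, trace_add, hSB, hAB,
      smul_eq_mul]
    ring
  have hM : M.trace.re = S.trace.re - A.trace.re := by
    simp only [M, trace_sub, trace_smul, trace_add, trace_conjTranspose, smul_eq_mul,
      RCLike.star_def, Complex.add_conj]
    simp
  have hM_nonneg : 0 ≤ M.trace.re := (Complex.nonneg_iff.mp hAS.trace_nonneg).1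
  calc ‖(A * Bᴴ).trace‖ = 2 * ‖(M * Bᴴ).trace‖ := by simp [hMB]
    _ ≤ 2 * (‖Bᴴ‖ * M.trace.re) := by gcongr; exact hAS.norm_trace_mul_le Bᴴ
    _ ≤ 2 * M.trace.re := by
        rw [l2_opNorm_conjTranspose]; gcongr; exact mul_le_of_le_one_left hM_nonneg hB_norm
    _ = 2 * (S.trace.re - A.trace.re) := by rw [hM]

/-- The key coefficient estimate for Bohr's inequality on `n × n` upper
triangular matrices: `|Tr(A Bᴴ)| ≤ 2 (Tr S − Re Tr A)`. -/
theorem bohr_coefficient_estimate {n : ℕ} (hn : 1 ≤ n)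
    (A S B : Matrix (Fin n) (Fin n) ℂ)
    (hA_ut : ∀ i j : Fin n, j < i → A i j = 0)
    (hS_herm : S.IsHermitian)
    (hS_ut : ∀ i j : Fin n, j < i → S i j = 0)
    (hAS : (S - (2 : ℂ)⁻¹ • (A + Aᴴ)).PosSemidef)
    (hB_sut : ∀ i j : Fin n, j ≤ i → B i j = 0)
    (hB_norm : ‖B‖ ≤ 1) :
    ‖(A * Bᴴ).trace‖ ≤ 2 * (S.trace.re - A.trace.re) :=
  bohr_coefficient_estimate_general A S B hA_ut hS_herm hS_ut hAS hB_sut hB_norm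
end
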